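/- Let T be a tree on a finite set I with n = |I| − 1 internal vertices, fix a nice total order identifying V(T) with {1, …, n}, and let ⊥ = x_0 ⋖ x_1 ⋖ ⋯ ⋖ x_n = ⊤ be the unique maximal chain of Ad(T) with increasing label sequence, so that V(x_i) = {1, …, i}. For i ∈ {1, …, n}, let B_i denote the set of atoms a of Ad(T) with λ(⊥, a) = i. Then for every i and every choice of atoms a_j ∈ B_j for j = 1, …, i, one has x_i = a_1 ∨ a_2 ∨ ⋯ ∨ a_i. -/

import Mathlib

open Finset

/-- A rooted binary tree with leaves labeled in `α`. -/
inductive BTree (α : Type) : Type where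
  | leaf : α → BTree α
  | node : BTree α → BTree α → BTree α

namespace BTree

variable {α : Type} [DecidableEq α]

/-- The list of leaf labels of the tree. -/
def leafList : BTree α → List α
  | .leaf a => [a]
  | .node l r => l.leafList ++ r.leafList

/-- The set of leaf labels of the tree. -/
def leaves (t : BTree α) : Finset α := t.leafList.toFinset

/-- `t` is a tree on the finite set `I`: its leaves are labeled bijectively by `I`. -/
def IsTreeOn (t : BTree α) (I : Finset α) : Prop :=
  t.leafList.Nodup ∧ t.leaves = I

/-- The set `V(t)` of internal vertices of the tree, each internal vertex being
represented by the set of its ancestor leaves (the leaf labels of the subtree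
rooted there).  In this representation a vertex `v` is below a vertex `w` in the
ancestor order (i.e. `w` lies on the path from `v` to the root) exactly when
`v ⊆ w`. -/
def vertexSet : BTree α → Finset (Finset α)
  | .leaf _ => ∅
  | .node l r => insert (l.leaves ∪ r.leaves) (l.vertexSet ∪ r.vertexSet)

/-- The list of internal vertices of the tree, recorded as the pairs
(left subtree, right subtree) hanging at each internal vertex. -/
def nodes : BTree α → List (BTree α × BTree α)
  | .leaf _ => []
  | .node l r => (l, r) :: (l.nodes ++ r.nodes)

/-- `meetVertex t i j` is the internal vertex `v_{(i,j)}` at which the paths from the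
leaves labeled `i` and `j` towards the root first meet (as the set of its ancestor
leaves); meaningful when `i ≠ j` are both leaf labels of `t`. -/
def meetVertex : BTree α → α → α → Finset α
  | .leaf a, _, _ => {a}
  | .node l r, i, j =>
    if i ∈ l.leaves ∧ j ∈ l.leaves then l.meetVertex i j
    else if i ∈ r.leaves ∧ j ∈ r.leaves then r.meetVertex i j
    else l.leaves ∪ r.leaves

/-- `S(J) = { v_{(i,j)} : i, j ∈ J, i ≠ j }`. -/
def S (t : BTree α) (J : Finset α) : Finset (Finset α) :=
  ((J ×ˢ J).filter fun p => p.1 ≠ p.2).image fun p => t.meetVertex p.1 p.2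

/-- A partition `π` of `I` is `T`-admissible when `S(B) ∩ S(B') = ∅` for every pair of
distinct blocks `B, B'` of `π`. -/
def Admissible (t : BTree α) {I : Finset α} (π : Finpartition I) : Prop :=
  ∀ B ∈ π.parts, ∀ C ∈ π.parts, B ≠ C → t.S B ∩ t.S C = ∅

/-- A nice total order on the internal vertices of `T`, encoded by an integer-valued
ranking function: it is injective on `V(T)` and is a linear extension of the ancestor
order (a vertex `v` is below `w`, i.e. `w` is on the path from `v` to the root, iff
`v ⊆ w` in the ancestor-leaves representation). -/
def IsNiceOrder (t : BTree α) (ord : Finset α → ℕ) : Prop :=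
  Set.InjOn ord ↑t.vertexSet ∧
    ∀ v ∈ t.vertexSet, ∀ w ∈ t.vertexSet, v ⊆ w → ord v ≤ ord w

/-- A nice total order identifying `V(T)` with `{1, …, n}`. -/
def IsNiceLabeling (t : BTree α) (n : ℕ) (ord : Finset α → ℕ) : Prop :=
  t.IsNiceOrder ord ∧ t.vertexSet.image ord = Finset.Icc 1 n

end BTree

/-- The poset `Ad(T)` of `T`-admissible partitions of `I`, ordered by refinement
(the order is inherited from the refinement order on `Finpartition I`). -/
def AdPartition {α : Type} [DecidableEq α] (T : BTree α) (I : Finset α) : Type :=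
  {π : Finpartition I // T.Admissible π}

namespace AdPartition

variable {α : Type} [DecidableEq α] {T : BTree α} {I : Finset α}

instance : PartialOrder (AdPartition T I) := Subtype.partialOrder _

/-- The set `V(π)` of internal vertices of a partition: the union of the `S(B)` over
the blocks `B` of `π`. -/
def verts (T : BTree α) {I : Finset α} (π : Finpartition I) : Finset (Finset α) :=
  π.parts.sup fun B => T.S B

/-- The edge label `λ(π, τ)` of a covering relation `π ⋖ τ` in `Ad(T)`: the unique
internal vertex `v` with `V(τ) = V(π) ∪ {v}` (extracted here as the union of the
finset `V(τ) \ V(π)`, which is the singleton `{v}` when `π ⋖ τ`). -/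
def label (T : BTree α) {I : Finset α} (π τ : AdPartition T I) : Finset α :=
  (verts T τ.1 \ verts T π.1).sup id

/-- The label sequence, with respect to a nice order `ord`, of a saturated chain
recorded as a list of consecutive elements. -/
def labelSeq (T : BTree α) {I : Finset α} (ord : Finset α → ℕ)
    (c : List (AdPartition T I)) : List ℕ :=
  (c.zip c.tail).map fun p => ord (label T p.1 p.2)

/-- The atom of `Ad(T)` whose unique doubleton block is `{p, q}`, all other blocks
being singletons. -/
def IsAtomPart (T : BTree α) (I : Finset α) (a : AdPartition T I) (p q : α) : Prop :=
  p ≠ q ∧ a.1.parts = insert {p, q} ((I \ {p, q}).image fun x => ({x} : Finset α))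

end AdPartition

section LatticeGen

variable {P : Type*} [PartialOrder P]

/-- A subset of a partial order closed under existing pairwise joins and meets. -/
def IsLatClosed (D : Set P) : Prop :=
  (∀ x ∈ D, ∀ y ∈ D, ∀ z, IsLUB {x, y} z → z ∈ D) ∧
    (∀ x ∈ D, ∀ y ∈ D, ∀ z, IsGLB {x, y} z → z ∈ D)

/-- The sublattice generated by a subset of a partial order: the smallest subset
containing it that is closed under pairwise joins and meets. -/
def latticeGen (s : Set P) : Set P :=
  ⋂₀ {D : Set P | s ⊆ D ∧ IsLatClosed D}

/-- The subset `D`, with the induced join and meet, is a distributive lattice: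
`x ∧ (y ∨ z) = (x ∧ y) ∨ (x ∧ z)` for all `x, y, z ∈ D`. -/
def IsDistribSet (D : Set P) : Prop :=
  ∀ x ∈ D, ∀ y ∈ D, ∀ z ∈ D,
    ∀ yz, IsLUB {y, z} yz → ∀ w, IsGLB {x, yz} w →
      ∀ xy, IsGLB {x, y} xy → ∀ xz, IsGLB {x, z} xz →
        ∀ u, IsLUB {xy, xz} u → w = u

end LatticeGen

section Aux

open Finset

namespace BTree

variable {α : Type} [DecidableEq α]

lemma leaves_node (l r : BTree α) : (BTree.node l r).leaves = l.leaves ∪ r.leaves := by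
  simp [leaves, leafList]

lemma leaves_nonempty : ∀ t : BTree α, t.leaves.Nonempty
  | .leaf a => ⟨a, by simp [leaves, leafList]⟩
  | .node l r => by
      obtain ⟨x, hx⟩ := leaves_nonempty l
      exact ⟨x, by simp [leaves_node, hx]⟩

lemma nodup_node {l r : BTree α} (h : (BTree.node l r).leafList.Nodup) :
    l.leafList.Nodup ∧ r.leafList.Nodup ∧ Disjoint l.leaves r.leaves := by
  rw [leafList, List.nodup_append] at h
  exact ⟨h.1, h.2.1, (List.disjoint_toFinset_iff_disjoint).2 (by intro a ha hb; exact h.2.2 a ha a hb rfl)⟩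

lemma meetVertex_subset_leaves : ∀ (t : BTree α) (p q : α), t.meetVertex p q ⊆ t.leaves
  | .leaf a, p, q => by simp [meetVertex, leaves, leafList]
  | .node l r, p, q => by
      rw [meetVertex, leaves_node]
      split_ifs with h1 h2
      · exact (meetVertex_subset_leaves l p q).trans subset_union_left
      · exact (meetVertex_subset_leaves r p q).trans subset_union_right
      · exact subset_rfl

lemma mem_meetVertex : ∀ (t : BTree α) (p q : α), p ∈ t.leaves → q ∈ t.leaves →
    p ∈ t.meetVertex p q ∧ q ∈ t.meetVertex p q
  | .leaf a, p, q, hp, hq => by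
      simp only [leaves, leafList, List.toFinset_cons, List.toFinset_nil,
        insert_empty_eq, mem_singleton] at hp hq
      simp [meetVertex, hp, hq]
  | .node l r, p, q, hp, hq => by
      rw [leaves_node, mem_union] at hp hq
      rw [meetVertex]
      split_ifs with h1 h2
      · exact mem_meetVertex l p q h1.1 h1.2
      · exact mem_meetVertex r p q h2.1 h2.2
      · constructor <;> rw [mem_union] <;> tauto

lemma vertexSet_left {l r : BTree α} : l.vertexSet ⊆ (BTree.node l r).vertexSet := by
  rw [vertexSet]; exact subset_union_left.trans (subset_insert _ _)

lemma vertexSet_right {l r : BTree α} : r.vertexSet ⊆ (BTree.node l r).vertexSet := by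
  rw [vertexSet]; exact subset_union_right.trans (subset_insert _ _)

lemma meetVertex_mem_vertexSet : ∀ (t : BTree α) (p q : α), p ∈ t.leaves → q ∈ t.leaves →
    p ≠ q → t.meetVertex p q ∈ t.vertexSet
  | .leaf a, p, q, hp, hq, hpq => by
      simp only [leaves, leafList, List.toFinset_cons, List.toFinset_nil,
        insert_empty_eq, mem_singleton] at hp hq
      exact absurd (hp.trans hq.symm) hpq
  | .node l r, p, q, hp, hq, hpq => by
      rw [leaves_node, mem_union] at hp hq
      rw [meetVertex, vertexSet]
      split_ifs with h1 h2
      · exact mem_insert_of_mem (mem_union_left _ (meetVertex_mem_vertexSet l p q h1.1 h1.2 hpq))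
      · exact mem_insert_of_mem (mem_union_right _ (meetVertex_mem_vertexSet r p q h2.1 h2.2 hpq))
      · exact mem_insert_self _ _

lemma meetVertex_node_left {l r : BTree α} {p q : α} (hp : p ∈ l.leaves) (hq : q ∈ l.leaves) :
    (BTree.node l r).meetVertex p q = l.meetVertex p q := by
  rw [meetVertex, if_pos ⟨hp, hq⟩]

lemma meetVertex_node_right {l r : BTree α} {p q : α}
    (hp : p ∈ r.leaves) (hq : q ∈ r.leaves) (hp' : p ∉ l.leaves) :
    (BTree.node l r).meetVertex p q = r.meetVertex p q := by
  rw [meetVertex, if_neg (fun h => hp' h.1), if_pos ⟨hp, hq⟩]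

lemma meetVertex_node_split {l r : BTree α} {p q : α}
    (h1 : ¬ (p ∈ l.leaves ∧ q ∈ l.leaves)) (h2 : ¬ (p ∈ r.leaves ∧ q ∈ r.leaves)) :
    (BTree.node l r).meetVertex p q = l.leaves ∪ r.leaves := by
  rw [meetVertex, if_neg h1, if_neg h2]

/-- `a` and `b` coincide, or their meet vertex is strictly below `v`. -/
def Below (t : BTree α) (a b : α) (v : Finset α) : Prop :=
  a = b ∨ (t.meetVertex a b ∈ t.vertexSet ∧ t.meetVertex a b ⊆ v ∧ t.meetVertex a b ≠ v)

lemma below_lift_left {l r : BTree α} {a b : α} {v : Finset α}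
    (ha : a ∈ l.leaves) (hb : b ∈ l.leaves) (h : Below l a b v) :
    Below (BTree.node l r) a b v := by
  rcases h with h | ⟨h1, h2, h3⟩
  · exact Or.inl h
  · exact Or.inr (by rw [meetVertex_node_left ha hb]; exact ⟨vertexSet_left h1, h2, h3⟩)

lemma below_lift_right {l r : BTree α} {a b : α} {v : Finset α}
    (ha : a ∈ r.leaves) (hb : b ∈ r.leaves) (ha' : a ∉ l.leaves) (h : Below r a b v) :
    Below (BTree.node l r) a b v := by
  rcases h with h | ⟨h1, h2, h3⟩
  · exact Or.inl h
  · exact Or.inr (by rw [meetVertex_node_right ha hb ha']; exact ⟨vertexSet_right h1, h2, h3⟩)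

lemma below_side_left {l r : BTree α} {a b : α}
    (hd : Disjoint l.leaves r.leaves) (ha : a ∈ l.leaves) (hb : b ∈ l.leaves) :
    Below (BTree.node l r) a b (l.leaves ∪ r.leaves) := by
  by_cases hab : a = b
  · exact Or.inl hab
  · refine Or.inr ?_
    rw [meetVertex_node_left ha hb]
    obtain ⟨x, hx⟩ := leaves_nonempty r
    have hsub : l.meetVertex a b ⊆ l.leaves := meetVertex_subset_leaves l a b
    refine ⟨vertexSet_left (meetVertex_mem_vertexSet l a b ha hb hab),
      hsub.trans subset_union_left, fun hEq => ?_⟩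
    have : x ∈ l.leaves := hsub (hEq ▸ mem_union_right _ hx)
    exact (disjoint_left.1 hd) this hx

lemma below_side_right {l r : BTree α} {a b : α}
    (hd : Disjoint l.leaves r.leaves) (ha : a ∈ r.leaves) (hb : b ∈ r.leaves) :
    Below (BTree.node l r) a b (l.leaves ∪ r.leaves) := by
  by_cases hab : a = b
  · exact Or.inl hab
  · refine Or.inr ?_
    rw [meetVertex_node_right ha hb (disjoint_right.1 hd ha)]
    obtain ⟨x, hx⟩ := leaves_nonempty l
    have hsub : r.meetVertex a b ⊆ r.leaves := meetVertex_subset_leaves r a b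
    refine ⟨vertexSet_right (meetVertex_mem_vertexSet r a b ha hb hab),
      hsub.trans subset_union_right, fun hEq => ?_⟩
    have : x ∈ r.leaves := hsub (hEq ▸ mem_union_left _ hx)
    exact (disjoint_left.1 hd) hx this

set_option maxHeartbeats 1000000 in
/-- Key splitting lemma: if two pairs of leaves have the same meet vertex, then
(possibly after swapping) corresponding leaves are equal or meet strictly below. -/
lemma meet_split : ∀ (t : BTree α), t.leafList.Nodup → ∀ {p q p' q' : α},
    p ∈ t.leaves → q ∈ t.leaves → p' ∈ t.leaves → q' ∈ t.leaves →
    p ≠ q → p' ≠ q' → t.meetVertex p q = t.meetVertex p' q' →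
    (Below t p p' (t.meetVertex p q) ∧ Below t q q' (t.meetVertex p q)) ∨
    (Below t p q' (t.meetVertex p q) ∧ Below t q p' (t.meetVertex p q))
  | .leaf a, _, p, q, p', q', hp, hq, _, _, hpq, _, _ => by
      simp only [leaves, leafList, List.toFinset_cons, List.toFinset_nil,
        insert_empty_eq, mem_singleton] at hp hq
      exact absurd (hp.trans hq.symm) hpq
  | .node l r, hnd, p, q, p', q', hp, hq, hp', hq', hpq, hpq', heq => by
      obtain ⟨hndl, hndr, hd⟩ := nodup_node hnd
      rw [leaves_node, mem_union] at hp hq hp' hq'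
      by_cases h1 : p ∈ l.leaves ∧ q ∈ l.leaves
      · -- p, q both in the left subtree
        rw [meetVertex_node_left h1.1 h1.2] at heq ⊢
        have hsub : l.meetVertex p q ⊆ l.leaves := meetVertex_subset_leaves l p q
        by_cases h1' : p' ∈ l.leaves ∧ q' ∈ l.leaves
        · rw [meetVertex_node_left h1'.1 h1'.2] at heq
          rcases meet_split l hndl h1.1 h1.2 h1'.1 h1'.2 hpq hpq' heq with ⟨u, w⟩ | ⟨u, w⟩
          · exact Or.inl ⟨below_lift_left h1.1 h1'.1 u, below_lift_left h1.2 h1'.2 w⟩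
          · exact Or.inr ⟨below_lift_left h1.1 h1'.2 u, below_lift_left h1.2 h1'.1 w⟩
        · exfalso
          by_cases h2' : p' ∈ r.leaves ∧ q' ∈ r.leaves
          · rw [meetVertex_node_right h2'.1 h2'.2 (disjoint_right.1 hd h2'.1)] at heq
            have hpmem := (mem_meetVertex l p q h1.1 h1.2).1
            have : p ∈ r.leaves := meetVertex_subset_leaves r p' q' (heq ▸ hpmem)
            exact disjoint_left.1 hd h1.1 this
          · rw [meetVertex_node_split h1' h2'] at heq
            obtain ⟨x, hx⟩ := leaves_nonempty r
            have : x ∈ l.leaves := hsub (heq ▸ mem_union_right _ hx)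
            exact disjoint_left.1 hd this hx
      · by_cases h2 : p ∈ r.leaves ∧ q ∈ r.leaves
        · -- p, q both in the right subtree
          rw [meetVertex_node_right h2.1 h2.2 (disjoint_right.1 hd h2.1)] at heq ⊢
          have hsub : r.meetVertex p q ⊆ r.leaves := meetVertex_subset_leaves r p q
          by_cases h2' : p' ∈ r.leaves ∧ q' ∈ r.leaves
          · rw [meetVertex_node_right h2'.1 h2'.2 (disjoint_right.1 hd h2'.1)] at heq
            rcases meet_split r hndr h2.1 h2.2 h2'.1 h2'.2 hpq hpq' heq with ⟨u, w⟩ | ⟨u, w⟩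
            · exact Or.inl ⟨below_lift_right h2.1 h2'.1 (disjoint_right.1 hd h2.1) u,
                below_lift_right h2.2 h2'.2 (disjoint_right.1 hd h2.2) w⟩
            · exact Or.inr ⟨below_lift_right h2.1 h2'.2 (disjoint_right.1 hd h2.1) u,
                below_lift_right h2.2 h2'.1 (disjoint_right.1 hd h2.2) w⟩
          · exfalso
            by_cases h1' : p' ∈ l.leaves ∧ q' ∈ l.leaves
            · rw [meetVertex_node_left h1'.1 h1'.2] at heq
              have hpmem := (mem_meetVertex r p q h2.1 h2.2).1
              have : p ∈ l.leaves := meetVertex_subset_leaves l p' q' (heq ▸ hpmem)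
              exact disjoint_left.1 hd this h2.1
            · rw [meetVertex_node_split h1' h2'] at heq
              obtain ⟨x, hx⟩ := leaves_nonempty l
              have : x ∈ r.leaves := hsub (heq ▸ mem_union_left _ hx)
              exact disjoint_left.1 hd hx this
        · -- p and q split across the two subtrees
          rw [meetVertex_node_split h1 h2] at heq ⊢
          have h1' : ¬ (p' ∈ l.leaves ∧ q' ∈ l.leaves) := by
            rintro ⟨u, w⟩
            rw [meetVertex_node_left u w] at heq
            obtain ⟨x, hx⟩ := leaves_nonempty r
            have : x ∈ l.leaves :=
              meetVertex_subset_leaves l p' q' (heq ▸ mem_union_right _ hx)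
            exact disjoint_left.1 hd this hx
          have h2' : ¬ (p' ∈ r.leaves ∧ q' ∈ r.leaves) := by
            rintro ⟨u, w⟩
            rw [meetVertex_node_right u w (disjoint_right.1 hd u)] at heq
            obtain ⟨x, hx⟩ := leaves_nonempty l
            have : x ∈ r.leaves :=
              meetVertex_subset_leaves r p' q' (heq ▸ mem_union_left _ hx)
            exact disjoint_left.1 hd hx this
          have hps : (p ∈ l.leaves ∧ q ∈ r.leaves) ∨ (p ∈ r.leaves ∧ q ∈ l.leaves) := by
            rcases hp with hpl | hpr <;> rcases hq with hql | hqr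
            · exact absurd ⟨hpl, hql⟩ h1
            · exact Or.inl ⟨hpl, hqr⟩
            · exact Or.inr ⟨hpr, hql⟩
            · exact absurd ⟨hpr, hqr⟩ h2
          have hps' : (p' ∈ l.leaves ∧ q' ∈ r.leaves) ∨ (p' ∈ r.leaves ∧ q' ∈ l.leaves) := by
            rcases hp' with hpl | hpr <;> rcases hq' with hql | hqr
            · exact absurd ⟨hpl, hql⟩ h1'
            · exact Or.inl ⟨hpl, hqr⟩
            · exact Or.inr ⟨hpr, hql⟩
            · exact absurd ⟨hpr, hqr⟩ h2'
          rcases hps with ⟨u, w⟩ | ⟨u, w⟩ <;> rcases hps' with ⟨u', w'⟩ | ⟨u', w'⟩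
          · exact Or.inl ⟨below_side_left hd u u', below_side_right hd w w'⟩
          · exact Or.inr ⟨below_side_left hd u w', below_side_right hd w u'⟩
          · exact Or.inr ⟨below_side_right hd u w', below_side_left hd w u'⟩
          · exact Or.inl ⟨below_side_right hd u u', below_side_left hd w w'⟩

end BTree

end Aux

section Main

open Finset

variable {α : Type} [DecidableEq α]

/-- Main claim: if a partition `y` links, for each label `j ≤ i`, some pair of leaves
whose meet vertex has label `j`, then it links every pair of leaves whose meet vertex
has label at most `i`. -/
lemma main_claim {I : Finset α} {T : BTree α}
    (hnd : T.leafList.Nodup) (hleaves : T.leaves = I)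
    {n : ℕ} {ord : Finset α → ℕ} (hord : T.IsNiceLabeling n ord)
    (y : Finpartition I) (i : ℕ)
    (H : ∀ j, 1 ≤ j → j ≤ i → ∃ p q : α, p ∈ I ∧ q ∈ I ∧ p ≠ q ∧
        ord (T.meetVertex p q) = j ∧ ∃ B ∈ y.parts, p ∈ B ∧ q ∈ B) :
    ∀ j, j ≤ i → ∀ p q : α, p ∈ I → q ∈ I → p ≠ q → ord (T.meetVertex p q) = j →
      ∃ B ∈ y.parts, p ∈ B ∧ q ∈ B := by
  obtain ⟨⟨hinj, hmono⟩, himg⟩ := hord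
  have hmemI : ∀ a : α, a ∈ I → a ∈ T.leaves := fun a ha => hleaves ▸ ha
  have hpos : ∀ v ∈ T.vertexSet, 1 ≤ ord v := by
    intro v hv
    have : ord v ∈ T.vertexSet.image ord := mem_image_of_mem _ hv
    rw [himg, mem_Icc] at this
    exact this.1
  have relrefl : ∀ a : α, a ∈ I → ∃ B ∈ y.parts, a ∈ B ∧ a ∈ B := by
    intro a ha
    obtain ⟨B, ⟨hB, haB⟩, -⟩ := y.existsUnique_mem ha
    exact ⟨B, hB, haB, haB⟩
  have reltrans : ∀ a b c : α, (∃ B ∈ y.parts, a ∈ B ∧ b ∈ B) →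
      (∃ B ∈ y.parts, b ∈ B ∧ c ∈ B) → ∃ B ∈ y.parts, a ∈ B ∧ c ∈ B := by
    rintro a b c ⟨B, hB, haB, hbB⟩ ⟨C, hC, hbC, hcC⟩
    exact ⟨B, hB, haB, (y.eq_of_mem_parts hC hB hbC hbB) ▸ hcC⟩
  intro j
  induction j using Nat.strong_induction_on with
  | _ j IH =>
    intro hj p q hpI hqI hpq hordv
    have hvmem : T.meetVertex p q ∈ T.vertexSet :=
      BTree.meetVertex_mem_vertexSet T p q (hmemI p hpI) (hmemI q hqI) hpq
    have hj1 : 1 ≤ j := hordv ▸ hpos _ hvmem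
    obtain ⟨p', q', hp'I, hq'I, hpq', hordv', ⟨B, hB, hp'B, hq'B⟩⟩ := H j hj1 hj
    have hv'mem : T.meetVertex p' q' ∈ T.vertexSet :=
      BTree.meetVertex_mem_vertexSet T p' q' (hmemI p' hp'I) (hmemI q' hq'I) hpq'
    have heq : T.meetVertex p q = T.meetVertex p' q' :=
      hinj hvmem hv'mem (by rw [hordv, hordv'])
    have step : ∀ a b : α, a ∈ I → b ∈ I →
        BTree.Below T a b (T.meetVertex p q) → ∃ C ∈ y.parts, a ∈ C ∧ b ∈ C := by
      intro a b haI hbI hbel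
      by_cases hab : a = b
      · subst hab; exact relrefl a haI
      rcases hbel with h | ⟨hm1, hm2, hm3⟩
      · exact absurd h hab
      · have hlt : ord (T.meetVertex a b) < j := by
          have hle : ord (T.meetVertex a b) ≤ ord (T.meetVertex p q) := hmono _ hm1 _ hvmem hm2
          have hne : ord (T.meetVertex a b) ≠ ord (T.meetVertex p q) :=
            fun h => hm3 (hinj hm1 hvmem h)
          omega
        exact IH _ hlt (by omega) a b haI hbI hab rfl
    rcases BTree.meet_split T hnd (hmemI p hpI) (hmemI q hqI) (hmemI p' hp'I)
        (hmemI q' hq'I) hpq hpq' heq with ⟨u, w⟩ | ⟨u, w⟩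
    · refine reltrans p q' q (reltrans p p' q' (step p p' hpI hp'I u) ⟨B, hB, hp'B, hq'B⟩) ?_
      obtain ⟨C, hC, hq, hq'⟩ := step q q' hqI hq'I w
      exact ⟨C, hC, hq', hq⟩
    · refine reltrans p p' q (reltrans p q' p' (step p q' hpI hq'I u)
        ⟨B, hB, hq'B, hp'B⟩) ?_
      obtain ⟨C, hC, hq, hp'⟩ := step q p' hqI hp'I w
      exact ⟨C, hC, hp', hq⟩

end Main

/-- let `⊥ = x_0 ⋖ x_1 ⋖ ⋯ ⋖ x_n = ⊤` be the unique maximal chain of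
`Ad(T)` with increasing label sequence (so `V(x_i) = {1, …, i}` under a nice
labeling of `V(T)` by `{1, …, n}`, `n = |I| − 1`).  If `B_j` is the set of atoms
with label `j`, then for every `i` and every choice of atoms `a_j ∈ B_j`
(`j = 1, …, i`) one has `x_i = a_1 ∨ a_2 ∨ ⋯ ∨ a_i`. -/
theorem stmt11 {α : Type} [DecidableEq α] (I : Finset α) (T : BTree α)
    (hT : T.IsTreeOn I) (n : ℕ) (hn : I.card = n + 1)
    (ord : Finset α → ℕ) (hord : T.IsNiceLabeling n ord)
    (x : Fin (n + 1) → AdPartition T I)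
    (hx0 : (x 0).1.parts = I.image (fun i => ({i} : Finset α)))
    (hxc : ∀ r : Fin n, x r.castSucc ⋖ x r.succ)
    (hxtop : (x (Fin.last n)).1.parts = {I})
    (hxV : ∀ i : Fin (n + 1),
      (AdPartition.verts T (x i).1).image ord = Finset.Icc 1 (i : ℕ))
    (i : ℕ) (hi1 : 1 ≤ i) (hin : i ≤ n)
    (a : ℕ → AdPartition T I)
    (ha : ∀ j, 1 ≤ j → j ≤ i → ∃ p q : α,
      AdPartition.IsAtomPart T I (a j) p q ∧ ord (T.meetVertex p q) = j) :
    IsLUB {s : AdPartition T I | ∃ j, 1 ≤ j ∧ j ≤ i ∧ a j = s}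
      (x ⟨i, by omega⟩) := by
  classical
  obtain ⟨hnd, hleaves⟩ := hT
  set xi : AdPartition T I := x ⟨i, by omega⟩ with hxi
  have hVi : (AdPartition.verts T xi.1).image ord = Finset.Icc 1 i := hxV ⟨i, by omega⟩
  have memS : ∀ (B : Finset α) (p q : α), p ∈ B → q ∈ B → p ≠ q →
      T.meetVertex p q ∈ T.S B := by
    intro B p q hp hq hpq
    rw [BTree.S, mem_image]
    exact ⟨(p, q), mem_filter.2 ⟨mem_product.2 ⟨hp, hq⟩, hpq⟩, rfl⟩
  have Sdest : ∀ (B : Finset α) (v : Finset α), v ∈ T.S B →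
      ∃ p q : α, p ∈ B ∧ q ∈ B ∧ p ≠ q ∧ T.meetVertex p q = v := by
    intro B v hv
    rw [BTree.S, mem_image] at hv
    obtain ⟨pr, hpr, hprv⟩ := hv
    rw [mem_filter, mem_product] at hpr
    exact ⟨pr.1, pr.2, hpr.1.1, hpr.1.2, hpr.2, hprv⟩
  have Hxi : ∀ j, 1 ≤ j → j ≤ i → ∃ p q : α, p ∈ I ∧ q ∈ I ∧ p ≠ q ∧
      ord (T.meetVertex p q) = j ∧ ∃ B ∈ xi.1.parts, p ∈ B ∧ q ∈ B := by
    intro j h1 h2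
    have hj : j ∈ (AdPartition.verts T xi.1).image ord := by
      rw [hVi]; exact mem_Icc.2 ⟨h1, h2⟩
    obtain ⟨v, hv, hvj⟩ := mem_image.1 hj
    rw [AdPartition.verts, Finset.mem_sup] at hv
    obtain ⟨B, hB, hvB⟩ := hv
    obtain ⟨p, q, hp, hq, hpq, hmv⟩ := Sdest B v hvB
    have hBI : B ⊆ I := xi.1.le hB
    exact ⟨p, q, hBI hp, hBI hq, hpq, by rw [hmv]; exact hvj, B, hB, hp, hq⟩
  have claimXi := main_claim hnd hleaves hord xi.1 i Hxi
  constructor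
  · rintro s ⟨j, hj1, hji, rfl⟩
    obtain ⟨p, q, ⟨hpq, hparts⟩, hordj⟩ := ha j hj1 hji
    have hpq_part : ({p, q} : Finset α) ∈ (a j).1.parts := by
      rw [hparts]; exact mem_insert_self _ _
    have hpqI : ({p, q} : Finset α) ⊆ I := (a j).1.le hpq_part
    have hpI : p ∈ I := hpqI (by simp)
    have hqI : q ∈ I := hpqI (by simp)
    obtain ⟨B, hB, hpB, hqB⟩ := claimXi j hji p q hpI hqI hpq hordj
    show (a j).1 ≤ xi.1
    intro t ht
    rw [hparts] at ht
    rcases mem_insert.1 ht with rfl | ht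
    · exact ⟨B, hB, insert_subset hpB (singleton_subset_iff.2 hqB)⟩
    · obtain ⟨z, hz, rfl⟩ := mem_image.1 ht
      obtain ⟨C, ⟨hC, hzC⟩, -⟩ := xi.1.existsUnique_mem (mem_sdiff.1 hz).1
      exact ⟨C, hC, singleton_subset_iff.2 hzC⟩
  · rintro y hy
    have Hy : ∀ j, 1 ≤ j → j ≤ i → ∃ p q : α, p ∈ I ∧ q ∈ I ∧ p ≠ q ∧
        ord (T.meetVertex p q) = j ∧ ∃ B ∈ y.1.parts, p ∈ B ∧ q ∈ B := by
      intro j h1 h2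
      obtain ⟨p, q, ⟨hpq, hparts⟩, hordj⟩ := ha j h1 h2
      have hle : (a j).1 ≤ y.1 := hy ⟨j, h1, h2, rfl⟩
      have hpq_part : ({p, q} : Finset α) ∈ (a j).1.parts := by
        rw [hparts]; exact mem_insert_self _ _
      obtain ⟨C, hC, hsub⟩ := hle hpq_part
      have hpqI : ({p, q} : Finset α) ⊆ I := (a j).1.le hpq_part
      exact ⟨p, q, hpqI (by simp), hpqI (by simp), hpq, hordj, C, hC,
        hsub (by simp), hsub (by simp)⟩
    have claimY := main_claim hnd hleaves hord y.1 i Hy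
    show xi.1 ≤ y.1
    intro B hB
    obtain ⟨p0, hp0⟩ := xi.1.nonempty_of_mem_parts hB
    have hBI : B ⊆ I := xi.1.le hB
    obtain ⟨C, ⟨hC, hp0C⟩, -⟩ := y.1.existsUnique_mem (hBI hp0)
    refine ⟨C, hC, fun q hq => ?_⟩
    by_cases hq0 : q = p0
    · exact hq0 ▸ hp0C
    · have hvmem : T.meetVertex p0 q ∈ AdPartition.verts T xi.1 := by
        rw [AdPartition.verts, Finset.mem_sup]
        exact ⟨B, hB, memS B p0 q hp0 hq (fun h => hq0 h.symm)⟩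
      have hjI : ord (T.meetVertex p0 q) ∈ Finset.Icc 1 i := by
        rw [← hVi]; exact mem_image_of_mem _ hvmem
      obtain ⟨D, hD, hp0D, hqD⟩ := claimY _ (mem_Icc.1 hjI).2 p0 q (hBI hp0) (hBI hq)
        (fun h => hq0 h.symm) rfl
      exact (y.1.eq_of_mem_parts hD hC hp0D hp0C) ▸ hqD
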